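/- Let f : ℝ → ℝ be a bounded measurable function with |f(ξ)| ≤ 1 for all ξ, compactly supported, satisfying sgn(f(ξ)) = sgn(ξ) for a.e. ξ (i.e., f(ξ) ≥ 0 for ξ > 0 and f(ξ) ≤ 0 for ξ < 0). Set v := ∫_ℝ f(ξ) dξ. Then for every ξ ∈ ℝ, ∫_{-∞}^{ξ} (f(s) - χ(s,v)) ds ≤ 0. -/

import Mathlib

/-!
Write `F ξ = ∫_{-∞}^ξ f` and `v = ∫ f`. A direct computation gives
`∫_{-∞}^ξ χ(·, v) = min (max ξ 0) (v - min ξ 0)`, so it suffices to bound `F ξ` by both terms.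
The sign condition and `|f| ≤ 1` give `f ≤ 1` on `[0, ξ)` and `f ≤ 0` on `(-∞, 0)`, whence
`F ξ ≤ max ξ 0`; symmetrically `f ≥ -1` on `[ξ, 0]` and `f ≥ 0` on `(0, ∞)` bound the tail
`v - F ξ = ∫_ξ^∞ f` from below by `min ξ 0`.
-/

open MeasureTheory

noncomputable def chi (ξ u : ℝ) : ℝ :=
  if 0 < ξ ∧ ξ < u then 1 else if u < ξ ∧ ξ < 0 then -1 else 0

open Set

section IndicatorOne

variable {α : Type*} [MeasurableSpace α] {μ : Measure α} {s t : Set α}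

lemma setIntegral_indicator_one (ht : MeasurableSet t) :
    ∫ x in s, t.indicator (1 : α → ℝ) x ∂μ = μ.real (s ∩ t) := by
  rw [integral_indicator_one ht, measureReal_restrict_apply ht, inter_comm]

lemma integrable_indicator_one (hs : MeasurableSet s) (hμ : μ s ≠ ⊤) :
    Integrable (s.indicator (1 : α → ℝ)) μ :=
  (integrable_indicator_iff hs).2 (integrableOn_const hμ)

end IndicatorOne

lemma chi_eq_indicator_sub_indicator (s u : ℝ) :
    chi s u = (Ioo 0 u).indicator 1 s - (Ioo u 0).indicator 1 s := by
  simp only [chi, indicator_apply, mem_Ioo, Pi.one_apply]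
  split_ifs <;> grind

lemma integrable_chi (u : ℝ) : Integrable (fun s ↦ chi s u) := by
  simp_rw [chi_eq_indicator_sub_indicator]
  exact (integrable_indicator_one measurableSet_Ioo measure_Ioo_lt_top.ne).sub
    (integrable_indicator_one measurableSet_Ioo measure_Ioo_lt_top.ne)

lemma setIntegral_Iio_chi (ξ u : ℝ) :
    ∫ s in Iio ξ, chi s u = min (max ξ 0) (u - min ξ 0) := by
  simp_rw [chi_eq_indicator_sub_indicator]
  rw [integral_sub (integrable_indicator_one measurableSet_Ioo measure_Ioo_lt_top.ne).integrableOn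
      (integrable_indicator_one measurableSet_Ioo measure_Ioo_lt_top.ne).integrableOn,
    setIntegral_indicator_one measurableSet_Ioo, setIntegral_indicator_one measurableSet_Ioo,
    Iio_inter_Ioo, Iio_inter_Ioo, Real.volume_real_Ioo, Real.volume_real_Ioo]
  simp only [min_def, max_def]
  split_ifs <;> linarith

lemma setIntegral_Iio_le_max {f : ℝ → ℝ} (hf : Integrable f) (hle : ∀ s, f s ≤ 1)
    (hneg : ∀ s < 0, f s ≤ 0) (ξ : ℝ) : ∫ s in Iio ξ, f s ≤ max ξ 0 := by
  have hdom : ∀ s ∈ Iio ξ, f s ≤ (Ico 0 ξ).indicator 1 s := fun s hs ↦ by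
    by_cases h0 : 0 ≤ s
    · simpa [indicator_of_mem (mem_Ico.2 ⟨h0, hs⟩)] using hle s
    · simpa [h0] using hneg s (not_le.1 h0)
  calc ∫ s in Iio ξ, f s ≤ ∫ s in Iio ξ, (Ico 0 ξ).indicator 1 s :=
        setIntegral_mono_on hf.integrableOn
          (integrable_indicator_one measurableSet_Ico measure_Ico_lt_top.ne).integrableOn
          measurableSet_Iio hdom
    _ = max ξ 0 := by
        rw [setIntegral_indicator_one measurableSet_Ico, inter_eq_right.2 Ico_subset_Iio_self,
          Real.volume_real_Ico, sub_zero]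

lemma min_le_setIntegral_Ici {f : ℝ → ℝ} (hf : Integrable f) (hge : ∀ s, -1 ≤ f s)
    (hpos : ∀ s > 0, 0 ≤ f s) (ξ : ℝ) : min ξ 0 ≤ ∫ s in Ici ξ, f s := by
  have hdom : ∀ s ∈ Ici ξ, -(Icc ξ 0).indicator 1 s ≤ f s := fun s hs ↦ by
    by_cases h0 : s ≤ 0
    · simpa [indicator_of_mem (mem_Icc.2 ⟨hs, h0⟩)] using hge s
    · simpa [h0] using hpos s (not_le.1 h0)
  calc min ξ 0 = ∫ s in Ici ξ, -(Icc ξ 0).indicator 1 s := by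
        rw [integral_neg, setIntegral_indicator_one measurableSet_Icc,
          inter_eq_right.2 Icc_subset_Ici_self, Real.volume_real_Icc, zero_sub, min_def, max_def]
        split_ifs <;> linarith
    _ ≤ ∫ s in Ici ξ, f s :=
        setIntegral_mono_on
          (integrable_indicator_one measurableSet_Icc measure_Icc_lt_top.ne).neg.integrableOn
          hf.integrableOn measurableSet_Ici hdom

lemma setIntegral_Iio_le_integral_sub_min {f : ℝ → ℝ} (hf : Integrable f)
    (hge : ∀ s, -1 ≤ f s) (hpos : ∀ s > 0, 0 ≤ f s) (ξ : ℝ) :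
    ∫ s in Iio ξ, f s ≤ (∫ s, f s) - min ξ 0 := by
  rw [← intervalIntegral.integral_Iio_add_Ici hf.integrableOn hf.integrableOn]
  linarith [min_le_setIntegral_Ici hf hge hpos ξ]

theorem stmt_5 (f : ℝ → ℝ) (hmeas : Measurable f) (hb : ∀ ξ, |f ξ| ≤ 1)
    (hsupp : HasCompactSupport f)
    (hsgn : ∀ ξ : ℝ, (0 < ξ → 0 ≤ f ξ) ∧ (ξ < 0 → f ξ ≤ 0))
    (v : ℝ) (hv : v = ∫ ξ : ℝ, f ξ) :
    ∀ ξ : ℝ, (∫ s in Set.Iio ξ, (f s - chi s v)) ≤ 0 := by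
  intro ξ
  have hf : Integrable f := memLp_one_iff_integrable.1 <|
    hsupp.memLp_of_bound hmeas.aestronglyMeasurable 1 (ae_of_all _ hb)
  rw [integral_sub hf.integrableOn (integrable_chi v).integrableOn, setIntegral_Iio_chi, sub_nonpos,
    hv]
  exact le_min (setIntegral_Iio_le_max hf (fun s ↦ (abs_le.1 (hb s)).2) (fun s ↦ (hsgn s).2) ξ)
    (setIntegral_Iio_le_integral_sub_min hf (fun s ↦ (abs_le.1 (hb s)).1) (fun s ↦ (hsgn s).1) ξ)
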